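/- Let X and Y be Banach spaces, 1 ≤ p < ∞, and let u : X → Y be a continuous linear operator whose adjoint u* : Y* → X* is almost p*-summing (where 1/p + 1/p* = 1). Then u takes almost unconditionally summable sequences in X into Cohen strongly p-summable sequences in Y; that is, if (x_i) ∈ Rad(X), then (u(x_i)) ∈ ℓ_p⟨Y⟩. -/

import Mathlib

open MeasureTheory Finset Filter
open scoped ENNReal NNReal

noncomputable section

universe u v

/-- The `i`-th Rademacher function. -/
def rademacher (i : ℕ) (t : ℝ) : ℝ :=
  if Int.fract ((2 : ℝ) ^ i * t) < 1 / 2 then 1 else -1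

/-- The Rademacher (`Rad`) norm of the first `m` terms of a sequence:
`(∫_0^1 ‖∑_{i<m} r_i(t) x_i‖² dt)^{1/2}`. -/
def radNorm {Z : Type u} [NormedAddCommGroup Z] [NormedSpace ℝ Z] (m : ℕ) (x : ℕ → Z) : ℝ :=
  (∫ t in (0:ℝ)..1, ‖∑ i ∈ Finset.range m, rademacher i t • x i‖ ^ 2) ^ ((1:ℝ) / 2)

/-- Conjugate exponent in `ℝ≥0∞` (`conjExp p = p*`, `1/p + 1/p* = 1`). -/
def conjExp (p : ℝ≥0∞) : ℝ≥0∞ := (1 - p⁻¹)⁻¹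

/-- Finite strong `ℓ_q` norm `‖(x_i)_{i<m}‖_q` (sup norm if `q = ∞`). -/
def lpNormFin {Z : Type u} [NormedAddCommGroup Z] (q : ℝ≥0∞) (m : ℕ) (x : ℕ → Z) : ℝ :=
  if q = ∞ then ⨆ i : Fin m, ‖x (i : ℕ)‖
  else (∑ i ∈ Finset.range m, ‖x i‖ ^ q.toReal) ^ (1 / q.toReal)

/-- Finite weak `ℓ_q` norm `‖(x_i)_{i<m}‖_{w,q}`. -/
def weakNorm {Z : Type u} [NormedAddCommGroup Z] [NormedSpace ℝ Z] (q : ℝ≥0∞) (m : ℕ)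
    (x : ℕ → Z) : ℝ :=
  if q = ∞ then ⨆ i : Fin m, ‖x (i : ℕ)‖
  else ⨆ φ : {φ : Z →L[ℝ] ℝ // ‖φ‖ ≤ 1},
    (∑ i ∈ Finset.range m, |φ.1 (x i)| ^ q.toReal) ^ (1 / q.toReal)

/-- Membership in `Rad(Z)`: almost unconditionally summable sequences. -/
def MemRad {Z : Type u} [NormedAddCommGroup Z] [NormedSpace ℝ Z] (x : ℕ → Z) : Prop :=
  ∃ C, ∀ m, radNorm m x ≤ C

/-- Weakly `q`-summable sequences `ℓ_q^w(Z)`. -/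
def MemWeakLp {Z : Type u} [NormedAddCommGroup Z] [NormedSpace ℝ Z] (q : ℝ≥0∞)
    (x : ℕ → Z) : Prop :=
  ∃ C, ∀ m, weakNorm q m x ≤ C

/-- Absolutely `p`-summable sequences `ℓ_p(Z)` (bounded sequences if `p = ∞`). -/
def MemStrongLp {Z : Type u} [NormedAddCommGroup Z] (p : ℝ≥0∞) (x : ℕ → Z) : Prop :=
  if p = ∞ then ∃ C, ∀ i, ‖x i‖ ≤ C else Summable fun i => ‖x i‖ ^ p.toReal

/-- Cohen strongly `p`-summable sequences `ℓ_p⟨Z⟩`. -/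
def MemCohen {Z : Type u} [NormedAddCommGroup Z] [NormedSpace ℝ Z] (p : ℝ≥0∞)
    (y : ℕ → Z) : Prop :=
  ∀ φ : ℕ → (Z →L[ℝ] ℝ), MemWeakLp (conjExp p) φ → Summable fun i => |φ i (y i)|

/-- Almost `p`-summing operators. -/
def IsAlmostPSumming {Z : Type u} {W : Type v} [NormedAddCommGroup Z] [NormedSpace ℝ Z]
    [NormedAddCommGroup W] [NormedSpace ℝ W] (p : ℝ≥0∞) (u : Z →L[ℝ] W) : Prop :=
  ∃ C, 0 ≤ C ∧ ∀ m (x : ℕ → Z), radNorm m (fun i => u (x i)) ≤ C * weakNorm p m x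

/-- The almost `p`-summing norm `π_{al.s.p}(u)`. -/
def almostNorm {Z : Type u} {W : Type v} [NormedAddCommGroup Z] [NormedSpace ℝ Z]
    [NormedAddCommGroup W] [NormedSpace ℝ W] (p : ℝ≥0∞) (u : Z →L[ℝ] W) : ℝ :=
  sInf {C | 0 ≤ C ∧ ∀ m (x : ℕ → Z), radNorm m (fun i => u (x i)) ≤ C * weakNorm p m x}

/-- Absolutely `p`-summing operators (every operator is `∞`-summing by convention). -/
def IsPSumming {Z : Type u} {W : Type v} [NormedAddCommGroup Z] [NormedSpace ℝ Z]
    [NormedAddCommGroup W] [NormedSpace ℝ W] (p : ℝ≥0∞) (u : Z →L[ℝ] W) : Prop :=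
  if p = ∞ then True
  else ∀ x : ℕ → Z, MemWeakLp p x → Summable fun i => ‖u (x i)‖ ^ p.toReal

/-- Cohen strongly `q`-summing with constant `C`. -/
def IsCohenStrongWith {Z : Type u} {W : Type v} [NormedAddCommGroup Z] [NormedSpace ℝ Z]
    [NormedAddCommGroup W] [NormedSpace ℝ W] (q : ℝ≥0∞) (C : ℝ) (u : Z →L[ℝ] W) : Prop :=
  ∀ m (x : ℕ → Z) (φ : ℕ → (W →L[ℝ] ℝ)),
    ∑ i ∈ Finset.range m, |φ i (u (x i))| ≤ C * lpNormFin q m x * weakNorm (conjExp q) m φ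

/-- Cohen strongly `q`-summing operators. -/
def IsCohenStrong {Z : Type u} {W : Type v} [NormedAddCommGroup Z] [NormedSpace ℝ Z]
    [NormedAddCommGroup W] [NormedSpace ℝ W] (q : ℝ≥0∞) (u : Z →L[ℝ] W) : Prop :=
  ∃ C, 0 ≤ C ∧ IsCohenStrongWith q C u

/-- The Banach space adjoint `u* : W* → Z*`. -/
def adj {Z : Type u} {W : Type v} [NormedAddCommGroup Z] [NormedSpace ℝ Z]
    [NormedAddCommGroup W] [NormedSpace ℝ W] (u : Z →L[ℝ] W) :
    (W →L[ℝ] ℝ) →L[ℝ] (Z →L[ℝ] ℝ) :=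
  (ContinuousLinearMap.compSL Z W ℝ (RingHom.id ℝ) (RingHom.id ℝ)).flip u

/-- `Z` has type `p` with constant `C`. -/
def HasTypeWith (p : ℝ≥0∞) (C : ℝ) (Z : Type u) [NormedAddCommGroup Z] [NormedSpace ℝ Z] :
    Prop :=
  ∀ m (x : ℕ → Z), radNorm m x ≤ C * lpNormFin p m x

/-- `Z` has type `p`. -/
def HasTypeP (p : ℝ≥0∞) (Z : Type u) [NormedAddCommGroup Z] [NormedSpace ℝ Z] : Prop :=
  ∃ C, 0 ≤ C ∧ HasTypeWith p C Z

/-- The type-`p` constant `T_p(Z)`. -/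
def typeConst (p : ℝ≥0∞) (Z : Type u) [NormedAddCommGroup Z] [NormedSpace ℝ Z] : ℝ :=
  sInf {C | 0 ≤ C ∧ HasTypeWith p C Z}

/-- `Z` is an `L_p`-space with constant `lam`. -/
def IsLpSpaceWith (p : ℝ≥0∞) [Fact (1 ≤ p)] (lam : ℝ) (Z : Type u) [NormedAddCommGroup Z]
    [NormedSpace ℝ Z] : Prop :=
  ∀ E : Submodule ℝ Z, FiniteDimensional ℝ E →
    ∃ F : Submodule ℝ Z, E ≤ F ∧ FiniteDimensional ℝ F ∧
      ∃ v : F ≃L[ℝ] PiLp p (fun _ : Fin (Module.finrank ℝ F) => ℝ),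
        ‖(v : F →L[ℝ] PiLp p (fun _ : Fin (Module.finrank ℝ F) => ℝ))‖ *
          ‖(v.symm : PiLp p (fun _ : Fin (Module.finrank ℝ F) => ℝ) →L[ℝ] F)‖ ≤ lam

/-- `Z` is an `L_p`-space. -/
def IsLpSpace (p : ℝ≥0∞) [Fact (1 ≤ p)] (Z : Type u) [NormedAddCommGroup Z]
    [NormedSpace ℝ Z] : Prop :=
  ∃ lam : ℝ, 1 < lam ∧ IsLpSpaceWith p lam Z

/-- `Z` is isomorphic to a Hilbert space. -/
def IsomorphicToHilbert (Z : Type u) [NormedAddCommGroup Z] [NormedSpace ℝ Z] : Prop :=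
  ∃ ι : Type u, Nonempty (Z ≃L[ℝ] lp (fun _ : ι => ℝ) 2)

/-- `Z` is isomorphic to a closed subspace of some `L_r(μ)`. -/
def IsomorphicToClosedSubspaceLp (r : ℝ≥0∞) [Fact (1 ≤ r)] (Z : Type u)
    [NormedAddCommGroup Z] [NormedSpace ℝ Z] : Prop :=
  ∃ (Ω : Type) (mΩ : MeasurableSpace Ω) (μ : @MeasureTheory.Measure Ω mΩ)
    (S : Submodule ℝ (@MeasureTheory.Lp Ω ℝ mΩ _ r μ)),
    IsClosed (S : Set (@MeasureTheory.Lp Ω ℝ mΩ _ r μ)) ∧ Nonempty (Z ≃L[ℝ] S)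

/-! By orthogonality of the Rademacher functions, `∑ ψᵢ(xᵢ) = ∫₀¹ (∑ rᵢ ψᵢ)(∑ rⱼ xⱼ) dt`, so
Cauchy–Schwarz bounds it by `‖(ψᵢ)‖_Rad ‖(xᵢ)‖_Rad`. Given `φ` weakly `p*`-summable, pick signs
`εᵢ = ±1` with `εᵢ φᵢ(u xᵢ) = |φᵢ(u xᵢ)|` and apply this to `ψᵢ = u*(εᵢ φᵢ)`: since the weak norm
ignores signs, the almost `p*`-summing inequality for `u*` bounds every partial sum of
`∑ |φᵢ(u xᵢ)|` by `C ‖φ‖_{w,p*} ‖x‖_Rad`. -/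

lemma Int.fract_add_half_lt_half_iff (y : ℝ) :
    Int.fract (y + 1 / 2) < 1 / 2 ↔ 1 / 2 ≤ Int.fract y := by
  have h0 := Int.fract_nonneg y
  have h1 := Int.fract_lt_one y
  have hy := Int.floor_add_fract y
  rcases lt_or_ge (Int.fract y) (1 / 2) with h | h
  · have : Int.fract (y + 1 / 2) = Int.fract y + 1 / 2 :=
      Int.fract_eq_iff.2 ⟨by linarith, by linarith, ⌊y⌋, by linarith⟩
    constructor <;> intro <;> linarith
  · have : Int.fract (y + 1 / 2) = Int.fract y - 1 / 2 :=
      Int.fract_eq_iff.2 ⟨by linarith, by linarith, ⌊y⌋ + 1, by push_cast; linarith⟩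
    constructor <;> intro <;> linarith

lemma measurable_rademacher (i : ℕ) : Measurable (rademacher i) :=
  Measurable.ite
    (measurableSet_lt (measurable_fract.comp (measurable_const_mul _)) measurable_const)
    measurable_const measurable_const

lemma abs_rademacher (i : ℕ) (t : ℝ) : |rademacher i t| = 1 := by
  unfold rademacher; split <;> norm_num

lemma rademacher_mul_self (i : ℕ) (t : ℝ) : rademacher i t * rademacher i t = 1 := by
  unfold rademacher; split <;> norm_num

lemma rademacher_add_intCast_div (i : ℕ) (t : ℝ) (n : ℤ) :
    rademacher i (t + n / 2 ^ i) = rademacher i t := by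
  simp only [rademacher, mul_add, mul_div_cancel₀ _ (pow_ne_zero i (two_ne_zero (α := ℝ))),
    Int.fract_add_intCast]

lemma rademacher_add_inv_two_pow_succ (i : ℕ) (t : ℝ) :
    rademacher i (t + (2 ^ (i + 1))⁻¹) = -rademacher i t := by
  have h : (2 : ℝ) ^ i * (t + (2 ^ (i + 1))⁻¹) = 2 ^ i * t + 1 / 2 := by
    rw [pow_succ]; field_simp
  simp only [rademacher, h, Int.fract_add_half_lt_half_iff]
  rcases lt_or_ge (Int.fract (2 ^ i * t)) (1 / 2) with h' | h'
  · rw [if_neg (not_le.2 h'), if_pos h']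
  · rw [if_pos h', if_neg (not_lt.2 h'), neg_neg]

lemma integral_rademacher_mul_of_lt {i j : ℕ} (hij : i < j) :
    ∫ t in (0 : ℝ)..1, rademacher i t * rademacher j t = 0 := by
  set f : ℝ → ℝ := fun t => rademacher i t * rademacher j t
  set s : ℝ := (2 ^ (i + 1))⁻¹
  obtain ⟨k, rfl⟩ := Nat.exists_eq_add_of_lt hij
  -- Shifting by `s` flips the sign of `r_i` and leaves the finer `r_j` unchanged.
  have hshift : ∀ t, f (t + s) = -f t := by
    intro t
    have hs : s = ((2 ^ k : ℕ) : ℤ) / 2 ^ (i + k + 1) := by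
      simp only [s]; push_cast; field_simp; ring
    have hi : rademacher i (t + s) = -rademacher i t := rademacher_add_inv_two_pow_succ i t
    have hj : rademacher (i + k + 1) (t + s) = rademacher (i + k + 1) t := by
      rw [hs, rademacher_add_intCast_div]
    simp only [f, hi, hj, neg_mul]
  have hper : Function.Periodic f 1 := by
    intro t
    have h1 : (1 : ℝ) = ((2 ^ i : ℕ) : ℤ) / 2 ^ i := by push_cast; field_simp
    have h2 : (1 : ℝ) = ((2 ^ (i + k + 1) : ℕ) : ℤ) / 2 ^ (i + k + 1) := by push_cast; field_simp
    simp only [f]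
    rw [h1, rademacher_add_intCast_div, ← h1, h2, rademacher_add_intCast_div]
  have key : ∫ t in (0 : ℝ)..1, f t = -∫ t in (0 : ℝ)..1, f t := calc
    ∫ t in (0 : ℝ)..1, f t = ∫ t in s..s + 1, f t := by
      simpa using hper.intervalIntegral_add_eq 0 s
    _ = ∫ t in (0 : ℝ)..1, f (t + s) := by
      rw [intervalIntegral.integral_comp_add_right]; simp [add_comm]
    _ = -∫ t in (0 : ℝ)..1, f t := by simp only [hshift, intervalIntegral.integral_neg]
  linarith

lemma integral_rademacher_mul (i j : ℕ) :
    ∫ t in (0 : ℝ)..1, rademacher i t * rademacher j t = if i = j then 1 else 0 := by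
  rcases lt_trichotomy i j with h | rfl | h
  · rw [integral_rademacher_mul_of_lt h, if_neg h.ne]
  · simp [rademacher_mul_self]
  · simp_rw [mul_comm (rademacher i _)]
    rw [integral_rademacher_mul_of_lt h, if_neg h.ne']

lemma intervalIntegrable_rademacher_mul (i j : ℕ) (a b : ℝ) :
    IntervalIntegrable (fun t => rademacher i t * rademacher j t) volume a b :=
  (intervalIntegrable_const (c := (1 : ℝ))).mono_fun
    ((measurable_rademacher i).mul (measurable_rademacher j)).aestronglyMeasurable
    (ae_of_all _ fun t => by simp [abs_rademacher])

section RademacherSum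

variable {Z : Type*} [NormedAddCommGroup Z] [NormedSpace ℝ Z]

def rademacherSum (m : ℕ) (z : ℕ → Z) (t : ℝ) : Z :=
  ∑ i ∈ range m, rademacher i t • z i

lemma radNorm_nonneg (m : ℕ) (z : ℕ → Z) : 0 ≤ radNorm m z :=
  Real.rpow_nonneg (intervalIntegral.integral_nonneg zero_le_one fun _ _ => by positivity) _

lemma stronglyMeasurable_rademacherSum (m : ℕ) (z : ℕ → Z) :
    StronglyMeasurable (rademacherSum m z) :=
  Finset.stronglyMeasurable_fun_sum _ fun i _ =>
    (measurable_rademacher i).stronglyMeasurable.smul_const (z i)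

lemma norm_rademacherSum_le (m : ℕ) (z : ℕ → Z) (t : ℝ) :
    ‖rademacherSum m z t‖ ≤ ∑ i ∈ range m, ‖z i‖ :=
  (norm_sum_le _ _).trans <| Finset.sum_le_sum fun i _ => by
    rw [norm_smul, Real.norm_eq_abs, abs_rademacher, one_mul]

lemma memLp_rademacherSum (m : ℕ) (z : ℕ → Z) (p : ℝ≥0∞) (μ : Measure ℝ) [IsFiniteMeasure μ] :
    MemLp (rademacherSum m z) p μ :=
  .of_bound (stronglyMeasurable_rademacherSum m z).aestronglyMeasurable _
    (ae_of_all _ (norm_rademacherSum_le m z))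

lemma rademacherSum_apply_rademacherSum (m : ℕ) (ψ : ℕ → Z →L[ℝ] ℝ) (x : ℕ → Z) (t : ℝ) :
    rademacherSum m ψ t (rademacherSum m x t) =
      ∑ i ∈ range m, ∑ j ∈ range m, rademacher i t * rademacher j t * ψ i (x j) := by
  simp only [rademacherSum, map_sum, map_smul, _root_.sum_apply, smul_apply, smul_eq_mul, mul_sum]
  rw [Finset.sum_comm]
  exact Finset.sum_congr rfl fun i _ => Finset.sum_congr rfl fun j _ => by ring

lemma integral_rademacherSum_apply_rademacherSum (m : ℕ) (ψ : ℕ → Z →L[ℝ] ℝ) (x : ℕ → Z) :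
    ∫ t in (0 : ℝ)..1, rademacherSum m ψ t (rademacherSum m x t) =
      ∑ i ∈ range m, ψ i (x i) := by
  have hterm : ∀ i j, IntervalIntegrable
      (fun t => rademacher i t * rademacher j t * ψ i (x j)) volume 0 1 :=
    fun i j => (intervalIntegrable_rademacher_mul i j 0 1).mul_const _
  simp_rw [rademacherSum_apply_rademacherSum]
  rw [intervalIntegral.integral_finsetSum fun i _ => by
    simpa only [Finset.sum_fn] using IntervalIntegrable.sum _ fun j _ => hterm i j]
  refine Finset.sum_congr rfl fun i hi => ?_
  simp_rw [intervalIntegral.integral_finsetSum fun j _ => hterm i j,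
    intervalIntegral.integral_mul_const, integral_rademacher_mul, ite_mul, one_mul, zero_mul]
  rw [Finset.sum_ite_eq, if_pos hi]

lemma sum_apply_le_radNorm_mul_radNorm (m : ℕ) (ψ : ℕ → Z →L[ℝ] ℝ) (x : ℕ → Z) :
    ∑ i ∈ range m, ψ i (x i) ≤ radNorm m ψ * radNorm m x := by
  set μ := volume.restrict (Set.Ioc (0 : ℝ) 1)
  set F := rademacherSum m ψ
  set G := rademacherSum m x
  have hF := memLp_rademacherSum m ψ (ENNReal.ofReal 2) μ
  have hG := memLp_rademacherSum m x (ENNReal.ofReal 2) μ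
  have hFG : Integrable (fun t => ‖F t‖ * ‖G t‖) μ :=
    (memLp_rademacherSum m ψ 2 μ).norm.integrable_mul (memLp_rademacherSum m x 2 μ).norm
  calc ∑ i ∈ range m, ψ i (x i) = ∫ t, F t (G t) ∂μ := by
        rw [← integral_rademacherSum_apply_rademacherSum,
          intervalIntegral.integral_of_le zero_le_one]
    _ ≤ ∫ t, ‖F t (G t)‖ ∂μ := (Real.le_norm_self _).trans (norm_integral_le_integral_norm _)
    _ ≤ ∫ t, ‖F t‖ * ‖G t‖ ∂μ := integral_mono_of_nonneg (ae_of_all _ fun _ => norm_nonneg _) hFG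
        (ae_of_all _ fun t => (F t).le_opNorm (G t))
    _ ≤ (∫ t, ‖F t‖ ^ (2 : ℝ) ∂μ) ^ (1 / (2 : ℝ)) * (∫ t, ‖G t‖ ^ (2 : ℝ) ∂μ) ^ (1 / (2 : ℝ)) :=
        integral_mul_le_Lp_mul_Lq_of_nonneg .two_two (ae_of_all _ fun _ => norm_nonneg _)
          (ae_of_all _ fun _ => norm_nonneg _) hF.norm hG.norm
    _ = radNorm m ψ * radNorm m x := by
        simp only [radNorm, intervalIntegral.integral_of_le zero_le_one, Real.rpow_two]; rfl

end RademacherSum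

lemma weakNorm_smul_of_abs_eq_one {Z : Type*} [NormedAddCommGroup Z] [NormedSpace ℝ Z]
    (q : ℝ≥0∞) (m : ℕ) (z : ℕ → Z) {ε : ℕ → ℝ} (hε : ∀ i, |ε i| = 1) :
    weakNorm q m (fun i => ε i • z i) = weakNorm q m z := by
  unfold weakNorm
  split
  · exact iSup_congr fun i => by rw [norm_smul, Real.norm_eq_abs, hε, one_mul]
  · refine iSup_congr fun φ => ?_
    simp only [map_smul, smul_eq_mul, abs_mul, hε, one_mul]

lemma weakNorm_nonneg {Z : Type*} [NormedAddCommGroup Z] [NormedSpace ℝ Z] (q : ℝ≥0∞)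
    (m : ℕ) (z : ℕ → Z) : 0 ≤ weakNorm q m z := by
  unfold weakNorm
  split
  · exact Real.iSup_nonneg fun _ => norm_nonneg _
  · exact Real.iSup_nonneg fun _ => by positivity

@[simp]
lemma adj_apply {X Y : Type*} [NormedAddCommGroup X] [NormedSpace ℝ X] [NormedAddCommGroup Y]
    [NormedSpace ℝ Y] (u : X →L[ℝ] Y) (φ : Y →L[ℝ] ℝ) (x : X) : adj u φ x = φ (u x) :=
  rfl

lemma sum_abs_apply_le_of_radNorm_adj_le {X Y : Type*} [NormedAddCommGroup X]
    [NormedSpace ℝ X] [NormedAddCommGroup Y] [NormedSpace ℝ Y] (u : X →L[ℝ] Y)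
    {q : ℝ≥0∞} {C : ℝ}
    (hC : ∀ m (ψ : ℕ → Y →L[ℝ] ℝ), radNorm m (fun i => adj u (ψ i)) ≤ C * weakNorm q m ψ)
    (m : ℕ) (φ : ℕ → Y →L[ℝ] ℝ) (x : ℕ → X) :
    ∑ i ∈ range m, |φ i (u (x i))| ≤ C * weakNorm q m φ * radNorm m x := by
  set ε : ℕ → ℝ := fun i => if 0 ≤ φ i (u (x i)) then 1 else -1
  have hε : ∀ i, |ε i| = 1 := fun i => by simp only [ε]; split <;> norm_num
  have hsign : ∀ i, |φ i (u (x i))| = adj u (ε i • φ i) (x i) := fun i => by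
    simp only [ε, adj_apply, smul_apply, smul_eq_mul]
    split_ifs with h
    · rw [abs_of_nonneg h, one_mul]
    · rw [abs_of_neg (not_le.1 h), neg_one_mul]
  calc ∑ i ∈ range m, |φ i (u (x i))| = ∑ i ∈ range m, adj u (ε i • φ i) (x i) :=
        Finset.sum_congr rfl fun i _ => hsign i
    _ ≤ radNorm m (fun i => adj u (ε i • φ i)) * radNorm m x :=
        sum_apply_le_radNorm_mul_radNorm m _ x
    _ ≤ C * weakNorm q m (fun i => ε i • φ i) * radNorm m x :=
        mul_le_mul_of_nonneg_right (hC m _) (radNorm_nonneg m x)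
    _ = C * weakNorm q m φ * radNorm m x := by rw [weakNorm_smul_of_abs_eq_one q m φ hε]

theorem stmt0_general {X : Type u} {Y : Type v} [NormedAddCommGroup X] [NormedSpace ℝ X]
    [NormedAddCommGroup Y] [NormedSpace ℝ Y]
    (p : ℝ≥0∞) (u : X →L[ℝ] Y)
    (hu : IsAlmostPSumming (conjExp p) (adj u)) :
    ∀ x : ℕ → X, MemRad x → MemCohen p (fun i => u (x i)) := by
  rintro x ⟨Cx, hCx⟩ φ ⟨Cφ, hCφ⟩
  obtain ⟨C, hC0, hC⟩ := hu
  refine summable_of_sum_range_le (c := C * Cφ * Cx) (fun _ => abs_nonneg _) fun m => ?_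
  calc ∑ i ∈ range m, |φ i (u (x i))|
      ≤ C * weakNorm (conjExp p) m φ * radNorm m x :=
        sum_abs_apply_le_of_radNorm_adj_le u hC m φ x
    _ ≤ C * Cφ * Cx := by
        have hCφ0 : 0 ≤ Cφ := (weakNorm_nonneg _ 0 φ).trans (hCφ 0)
        gcongr
        exacts [radNorm_nonneg m x, hCφ m, hCx m]

/-- If `u* ` is almost `p*`-summing for some `1 ≤ p < ∞`, then `u` maps
almost unconditionally summable sequences into Cohen strongly `p`-summable sequences. -/
theorem stmt0 {X : Type u} {Y : Type v} [NormedAddCommGroup X] [NormedSpace ℝ X]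
    [CompleteSpace X] [NormedAddCommGroup Y] [NormedSpace ℝ Y] [CompleteSpace Y]
    (p : ℝ≥0∞) (hp1 : 1 ≤ p) (hp2 : p ≠ ∞) (u : X →L[ℝ] Y)
    (hu : IsAlmostPSumming (conjExp p) (adj u)) :
    ∀ x : ℕ → X, MemRad x → MemCohen p (fun i => u (x i)) :=
  stmt0_general p u hu

end
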